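/- arXiv:1005.3871 — 3 statements merged into one kernel-verified Lean document; each statement's English description precedes it below -/
import Mathlib

section
/- Define V(z) := ∏_{p < z} (1 − (p² − 2)/((p−1)(p²−1))), the product over primes p < z. There exists a constant A > 0 such that for all real numbers 2 ≤ z₁ < z₂ one has |V(z₁)/V(z₂) − (log z₂)/(log z₁)| ≤ A·(log z₂)/(log z₁)²; in other words V(z₁)/V(z₂) = (log z₂/log z₁)·(1 + O(1/log z₁)) uniformly in 2 ≤ z₁ < z₂. -/
/-!
Write `a(p) = (p² - 2)/((p - 1)(p² - 1)) = 1/p + O(1/p²)`. Then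
`log (V(z₁)/V(z₂)) = ∑_{z₁ ≤ p < z₂} -log (1 - a(p)) = ∑_{z₁ ≤ p < z₂} 1/p + O(1/z₁)`.
Mertens' first theorem `∑_{p < N} log p / p = log N + O(1)` follows from Legendre's formula for
`log M!` and Chebyshev's bound `θ(M) ≤ M log 4`; partial summation against `1/log k` turns it into
`∑_{m ≤ p < n} 1/p = log log n - log log m + O(1/log m)`. Hence
`log (V(z₁)/V(z₂)) = log (log z₂/log z₁) + O(1/log z₁)`, and since this error is bounded,
exponentiating costs only a constant factor.
-/

open Real Finset
open scoped Nat

lemma log_sub_log_le_div {x y : ℝ} (hx : 0 < x) (hy : 0 < y) :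
    log y - log x ≤ (y - x) / x := by
  have h := log_le_sub_one_of_pos (div_pos hy hx)
  rwa [log_div hy.ne' hx.ne', div_sub_one hx.ne'] at h

lemma div_le_log_sub_log {x y : ℝ} (hx : 0 < x) (hy : 0 < y) :
    (y - x) / y ≤ log y - log x := by
  have h := one_sub_inv_le_log_of_pos (div_pos hy hx)
  rwa [log_div hy.ne' hx.ne', inv_div, one_sub_div hy.ne'] at h

lemma sum_Ico_sub_succ (f : ℕ → ℝ) {m n : ℕ} (hmn : m ≤ n) :
    ∑ k ∈ Ico m n, (f k - f (k + 1)) = f m - f n := by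
  simpa only [sub_neg_eq_add, neg_add_eq_sub] using sum_Ico_sub (fun k => -f k) hmn

lemma abs_log_factorial_sub_le (M : ℕ) : |log (M ! : ℝ) - M * log M| ≤ M := by
  have hfac : (0 : ℝ) < M ! := by exact_mod_cast M.factorial_pos
  rw [abs_le]
  constructor
  · rcases M.eq_zero_or_pos with rfl | hM
    · simp
    have h := pow_div_factorial_le_exp (M : ℝ) M.cast_nonneg M
    have hM' : (0 : ℝ) < M := by exact_mod_cast hM
    rw [← log_le_log_iff (by positivity) (exp_pos _), log_exp, log_div (by positivity) hfac.ne',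
      log_pow] at h
    linarith
  · have h : log (M ! : ℝ) ≤ log ((M : ℝ) ^ M) :=
      log_le_log hfac (by exact_mod_cast M.factorial_le_pow)
    rw [log_pow] at h
    linarith [M.cast_nonneg' (α := ℝ)]

lemma abs_factorization_factorial_sub_le {p : ℕ} (hp : p.Prime) (M : ℕ) :
    |((M !).factorization p : ℝ) - M / p| ≤ 1 + M / (p * (p - 1)) := by
  have := Fact.mk hp
  have hp1 : (1 : ℝ) < p := by exact_mod_cast hp.one_lt
  rw [Nat.factorization_def _ hp]
  have lower : (M : ℝ) / p - 1 ≤ padicValNat p M ! := by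
    have h1 : M / p ≤ padicValNat p M ! := by
      rw [padicValNat_factorial (b := p.log M + 2) (by omega)]
      simpa using single_le_sum (f := fun i => M / p ^ i) (fun _ _ => Nat.zero_le _)
        (show 1 ∈ Ico 1 (p.log M + 2) by simp)
    have h2 := Nat.sub_one_lt_floor ((M : ℝ) / p)
    rw [Nat.floor_div_eq_div] at h2
    exact h2.le.trans (by exact_mod_cast h1)
  have upper : (padicValNat p M ! : ℝ) ≤ M / (p - 1) := by
    have h' : ((p - 1 : ℕ) : ℝ) * padicValNat p M ! ≤ M := by
      exact_mod_cast sub_one_mul_padicValNat_factorial (p := p) M ▸ Nat.sub_le _ _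
    rw [Nat.cast_sub hp.one_le, Nat.cast_one] at h'
    rw [le_div_iff₀ (by linarith)]
    linarith
  have hsplit : (M : ℝ) / (p - 1) = M / p + M / (p * (p - 1)) := by
    have : (p : ℝ) - 1 ≠ 0 := by linarith
    field_simp
    ring
  have hnonneg : (0 : ℝ) ≤ M / (p * (p - 1)) := by
    have : (0 : ℝ) < p - 1 := by linarith
    positivity
  rw [abs_le]
  constructor <;> linarith

lemma sum_Ico_log_div_mul_sub_one_le (n : ℕ) :
    ∑ k ∈ Ico 2 n, log k / (k * (k - 1)) ≤ 2 := by
  rcases lt_or_ge n 2 with hn | hn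
  · simp [Ico_eq_empty_of_le hn.le]
  set h : ℕ → ℝ := fun k => (log k + 1) / (k - 1)
  have hterm : ∀ k ∈ Ico 2 n, log k / (k * (k - 1)) ≤ h k - h (k + 1) := by
    intro k hk
    have hk : (2 : ℝ) ≤ k := by exact_mod_cast (mem_Ico.mp hk).1
    have hd : k * (log (k + 1) - log k) ≤ 1 := by
      have := log_sub_log_le_div (by linarith : (0 : ℝ) < k) (by linarith : (0 : ℝ) < k + 1)
      rw [add_sub_cancel_left] at this
      rwa [← le_div_iff₀' (by linarith)]
    have hd0 : 0 ≤ log (k + 1) - log k :=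
      sub_nonneg.mpr (log_le_log (by linarith) (by linarith))
    have hrhs : h k - h (k + 1)
        = (log k + 1 - (k - 1) * (log (k + 1) - log k)) / (k * (k - 1)) := by
      simp only [h, Nat.cast_add, Nat.cast_one, add_sub_cancel_right]
      field_simp [(by linarith : (k : ℝ) - 1 ≠ 0), (by linarith : (k : ℝ) ≠ 0)]
      ring
    rw [hrhs]
    exact div_le_div_of_nonneg_right (by nlinarith) (by nlinarith)
  calc ∑ k ∈ Ico 2 n, log k / (k * (k - 1))
      ≤ ∑ k ∈ Ico 2 n, (h k - h (k + 1)) := sum_le_sum hterm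
    _ = h 2 - h n := sum_Ico_sub_succ h hn
    _ ≤ 2 := by
      have hn' : (2 : ℝ) ≤ n := by exact_mod_cast hn
      have : 0 ≤ h n :=
        div_nonneg (by linarith [log_nonneg (by linarith : (1 : ℝ) ≤ n)]) (by linarith)
      have : h 2 = log 2 + 1 := by norm_num [h]
      linarith [log_two_lt_d9]

lemma Nat.primeFactors_factorial (M : ℕ) : (M !).primeFactors = Nat.primesLE M := by
  ext p
  simp only [Nat.mem_primeFactors, Nat.primesLE, Nat.mem_primesBelow, Nat.lt_succ_iff]
  constructor
  · rintro ⟨hp, hdvd, -⟩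
    exact ⟨hp.dvd_factorial.mp hdvd, hp⟩
  · rintro ⟨hpM, hp⟩
    exact ⟨hp, hp.dvd_factorial.mpr hpM, M.factorial_ne_zero⟩

noncomputable def mertensSum (N : ℕ) : ℝ := ∑ p ∈ N.primesBelow, log p / p

lemma abs_log_factorial_sub_mul_mertensSum_le (M : ℕ) :
    |log (M ! : ℝ) - M * mertensSum (M + 1)| ≤ (log 4 + 2) * M := by
  have hlog : log (M ! : ℝ)
      = ∑ p ∈ (M + 1).primesBelow, ((M !).factorization p : ℝ) * log p := by
    rw [log_nat_eq_sum_factorization, Finsupp.sum, Nat.support_factorization,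
      Nat.primeFactors_factorial]
    rfl
  have htheta : ∑ p ∈ (M + 1).primesBelow, log p ≤ log 4 * M :=
    (Chebyshev.theta_eq_sum_primesLE_log M).symm.le.trans
      (Chebyshev.theta_le_log4_mul_x M.cast_nonneg)
  have hsub : (M + 1).primesBelow ⊆ Ico 2 (M + 1) := fun p hp => by
    have := Nat.mem_primesBelow.mp hp
    exact mem_Ico.mpr ⟨this.2.two_le, this.1⟩
  have htail : ∑ p ∈ (M + 1).primesBelow, log p / (p * (p - 1)) ≤ 2 := by
    refine (sum_le_sum_of_subset_of_nonneg hsub fun k hk _ => ?_).trans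
      (sum_Ico_log_div_mul_sub_one_le _)
    have hk : (2 : ℝ) ≤ k := by exact_mod_cast (mem_Ico.mp hk).1
    exact div_nonneg (log_nonneg (by linarith)) (by nlinarith)
  calc |log (M ! : ℝ) - M * mertensSum (M + 1)|
      = |∑ p ∈ (M + 1).primesBelow, (((M !).factorization p : ℝ) - M / p) * log p| := by
        rw [hlog, mertensSum, mul_sum, ← sum_sub_distrib]
        congr 1
        exact sum_congr rfl fun p _ => by ring
    _ ≤ ∑ p ∈ (M + 1).primesBelow, (1 + M / (p * (p - 1))) * log p := by
        refine (abs_sum_le_sum_abs _ _).trans (sum_le_sum fun p hp => ?_)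
        have hp := (Nat.mem_primesBelow.mp hp).2
        rw [abs_mul, abs_of_nonneg (log_natCast_nonneg p)]
        exact mul_le_mul_of_nonneg_right (abs_factorization_factorial_sub_le hp M)
          (log_natCast_nonneg p)
    _ = ∑ p ∈ (M + 1).primesBelow, log p
          + M * ∑ p ∈ (M + 1).primesBelow, log p / (p * (p - 1)) := by
        rw [mul_sum, ← sum_add_distrib]
        exact sum_congr rfl fun p _ => by ring
    _ ≤ (log 4 + 2) * M := by nlinarith [M.cast_nonneg (α := ℝ)]

lemma abs_mertensSum_sub_log_le (N : ℕ) : |mertensSum N - log N| ≤ 6 := by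
  rcases N with _ | M
  · simp [mertensSum]
  rcases M.eq_zero_or_pos with rfl | hM
  · simp [mertensSum]
  have hM : (1 : ℝ) ≤ M := by exact_mod_cast hM
  have hM0 : (0 : ℝ) < M := by linarith
  have hmain : |mertensSum (M + 1) - log M| ≤ log 4 + 3 := by
    refine le_of_mul_le_mul_left ?_ hM0
    calc (M : ℝ) * |mertensSum (M + 1) - log M|
        = |(log (M ! : ℝ) - M * log M) - (log (M ! : ℝ) - M * mertensSum (M + 1))| := by
          rw [← abs_of_pos hM0, ← abs_mul, abs_of_pos hM0]
          congr 1
          ring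
      _ ≤ M + (log 4 + 2) * M :=
          (abs_sub _ _).trans (add_le_add (abs_log_factorial_sub_le M)
            (abs_log_factorial_sub_mul_mertensSum_le M))
      _ = M * (log 4 + 3) := by ring
  have hstep : |log M - log ((M + 1 : ℕ) : ℝ)| ≤ 1 := by
    rw [abs_sub_comm]
    push_cast
    rw [abs_of_nonneg (sub_nonneg.mpr (log_le_log hM0 (by linarith)))]
    refine (log_sub_log_le_div hM0 (by linarith)).trans ?_
    rwa [add_sub_cancel_left, div_le_one hM0]
  have hlog4 : log 4 < 2 := by
    rw [show (4 : ℝ) = 2 ^ 2 by norm_num, log_pow]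
    push_cast
    linarith [log_two_lt_d9]
  linarith [abs_sub_le (mertensSum (M + 1)) (log M) (log ((M + 1 : ℕ) : ℝ))]

lemma abs_sub_div_sub_log_sub_log_le {u v : ℝ} (hu : 0 < u) (huv : u ≤ v)
    (hvu : v - u ≤ 1) :
    |(v - u) / u - (log v - log u)| ≤ u⁻¹ - v⁻¹ := by
  have hv : 0 < v := hu.trans_le huv
  have hinv : v⁻¹ ≤ u⁻¹ := inv_anti₀ hu huv
  have hupper := div_le_log_sub_log hu hv
  have hgap : (v - u) / u - (v - u) / v = (v - u) * (u⁻¹ - v⁻¹) := by ring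
  rw [abs_of_nonneg (sub_nonneg.mpr (log_sub_log_le_div hu hv))]
  nlinarith

lemma abs_sum_Ico_sub_mul_le {R g : ℕ → ℝ} {B : ℝ} {m n : ℕ} (hmn : m ≤ n)
    (hR : ∀ k ∈ Icc m n, |R k| ≤ B) (hg : ∀ k ∈ Ico m n, g (k + 1) ≤ g k) (hg0 : 0 ≤ g n) :
    |∑ k ∈ Ico m n, (R (k + 1) - R k) * g k| ≤ 2 * B * g m := by
  have hparts : ∑ k ∈ Ico m n, (R (k + 1) - R k) * g k
      = (R n * g n - R m * g m) + ∑ k ∈ Ico m n, R (k + 1) * (g k - g (k + 1)) := by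
    rw [← sum_Ico_sub (fun k => R k * g k) hmn, ← sum_add_distrib]
    exact sum_congr rfl fun k _ => by ring
  have htel : ∑ k ∈ Ico m n, (g k - g (k + 1)) = g m - g n := sum_Ico_sub_succ g hmn
  have hgnm : g n ≤ g m := by
    linarith [sum_nonneg fun k hk => sub_nonneg.mpr (hg k hk)]
  have hsum : |∑ k ∈ Ico m n, R (k + 1) * (g k - g (k + 1))| ≤ B * (g m - g n) := by
    rw [← htel, mul_sum]
    refine (abs_sum_le_sum_abs _ _).trans (sum_le_sum fun k hk => ?_)
    have hk := mem_Ico.mp hk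
    rw [abs_mul, abs_of_nonneg (sub_nonneg.mpr (hg k (mem_Ico.mpr hk)))]
    exact mul_le_mul_of_nonneg_right (hR (k + 1) (mem_Icc.mpr ⟨by omega, hk.2⟩))
      (sub_nonneg.mpr (hg k (mem_Ico.mpr hk)))
  have hRn : |R n * g n| ≤ B * g n := by
    rw [abs_mul, abs_of_nonneg hg0]
    exact mul_le_mul_of_nonneg_right (hR n (right_mem_Icc.mpr hmn)) hg0
  have hRm : |R m * g m| ≤ B * g m := by
    rw [abs_mul, abs_of_nonneg (hg0.trans hgnm)]
    exact mul_le_mul_of_nonneg_right (hR m (left_mem_Icc.mpr hmn)) (hg0.trans hgnm)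
  rw [hparts]
  linarith [abs_add_le (R n * g n - R m * g m) (∑ k ∈ Ico m n, R (k + 1) * (g k - g (k + 1))),
    abs_sub (R n * g n) (R m * g m)]

lemma mertensSum_succ (k : ℕ) :
    mertensSum (k + 1) = mertensSum k + if k.Prime then log k / k else 0 := by
  unfold mertensSum
  rw [Nat.primesBelow_succ]
  split_ifs with hk
  · rw [sum_insert (Nat.notMem_primesBelow k), add_comm]
  · rw [add_zero]

lemma Nat.primesBelow_sdiff_primesBelow {m n : ℕ} :
    n.primesBelow \ m.primesBelow = {k ∈ Ico m n | k.Prime} := by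
  ext p
  simp only [mem_sdiff, Nat.mem_primesBelow, mem_filter, mem_Ico]
  by_cases hp : p.Prime <;> simp only [hp, and_true, and_false, not_false_eq_true]
  omega

lemma abs_sum_inv_primes_sub_log_log_le {m n : ℕ} (hm : 2 ≤ m) (hmn : m ≤ n) :
    |∑ p ∈ n.primesBelow \ m.primesBelow, (p : ℝ)⁻¹ - (log (log n) - log (log m))|
      ≤ 13 / log m := by
  set g : ℕ → ℝ := fun k => (log k)⁻¹
  set R : ℕ → ℝ := fun k => mertensSum k - log k
  have hlog_pos : ∀ k : ℕ, 2 ≤ k → 0 < log (k : ℝ) := fun k hk =>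
    log_pos (by exact_mod_cast hk)
  have hprimes : ∑ p ∈ n.primesBelow \ m.primesBelow, (p : ℝ)⁻¹
      = ∑ k ∈ Ico m n, ((log (k + 1 : ℕ) - log k) * g k + (R (k + 1) - R k) * g k) := by
    rw [Nat.primesBelow_sdiff_primesBelow, sum_filter]
    refine sum_congr rfl fun k hk => ?_
    have hk := hlog_pos k (hm.trans (mem_Ico.mp hk).1)
    have hsucc := mertensSum_succ k
    simp only [R, g, ← add_mul]
    split_ifs at hsucc ⊢ with hprime
    · rw [show mertensSum (k + 1) - log (k + 1 : ℕ) - (mertensSum k - log k)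
          = log k / k - (log (k + 1 : ℕ) - log k) by rw [hsucc]; ring]
      field_simp
      ring
    · rw [show mertensSum (k + 1) - log (k + 1 : ℕ) - (mertensSum k - log k)
          = - (log (k + 1 : ℕ) - log k) by rw [hsucc]; ring]
      ring
  have hloglog : log (log n) - log (log m)
      = ∑ k ∈ Ico m n, (log (log (k + 1 : ℕ)) - log (log k)) :=
    (sum_Ico_sub (fun k => log (log (k : ℝ))) hmn).symm
  have hg : ∀ k ∈ Ico m n, g (k + 1) ≤ g k := fun k hk => by
    have hk2 := hm.trans (mem_Ico.mp hk).1
    exact inv_anti₀ (hlog_pos k hk2)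
      (log_le_log (by exact_mod_cast (by omega : 0 < k)) (by exact_mod_cast k.le_succ))
  have hg0 : ∀ k, 0 ≤ g k := fun k => inv_nonneg.mpr (log_natCast_nonneg k)
  have hmain : |∑ k ∈ Ico m n, ((log (k + 1 : ℕ) - log k) * g k
      - (log (log (k + 1 : ℕ)) - log (log k)))| ≤ g m := by
    refine (abs_sum_le_sum_abs _ _).trans ?_
    refine (sum_le_sum fun k hk => ?_).trans ((sum_Ico_sub_succ g hmn).trans_le
      (by linarith [hg0 n]))
    have hk2 := hm.trans (mem_Ico.mp hk).1
    have hk : (2 : ℝ) ≤ k := by exact_mod_cast hk2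
    rw [mul_comm, ← div_eq_inv_mul]
    refine abs_sub_div_sub_log_sub_log_le (hlog_pos k hk2)
      (log_le_log (by positivity) (by exact_mod_cast k.le_succ)) ?_
    push_cast
    refine (log_sub_log_le_div (by linarith) (by linarith)).trans ?_
    rw [add_sub_cancel_left, div_le_one (by linarith)]
    linarith
  have habel : |∑ k ∈ Ico m n, (R (k + 1) - R k) * g k| ≤ 2 * 6 * g m :=
    abs_sum_Ico_sub_mul_le hmn (fun k _ => abs_mertensSum_sub_log_le k) hg (hg0 n)
  rw [hprimes, hloglog, ← sum_sub_distrib]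
  calc _ = |∑ k ∈ Ico m n, ((log (k + 1 : ℕ) - log k) * g k
          - (log (log (k + 1 : ℕ)) - log (log k)))
          + ∑ k ∈ Ico m n, (R (k + 1) - R k) * g k| := by
        rw [← sum_add_distrib]
        exact congrArg _ (sum_congr rfl fun k _ => by ring)
    _ ≤ g m + 2 * 6 * g m := (abs_add_le _ _).trans (add_le_add hmain habel)
    _ = 13 / log m := by simp only [g]; ring

noncomputable def sieveWeight (x : ℝ) : ℝ := (x ^ 2 - 2) / ((x - 1) * (x ^ 2 - 1))

/-- `V(z)` is `sieveProduct ⌈z⌉₊`: the primes `p < z` are those below `⌈z⌉₊`. -/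
noncomputable def sieveProduct (N : ℕ) : ℝ := ∏ p ∈ N.primesBelow, (1 - sieveWeight p)

lemma sieveWeight_le {x : ℝ} (hx : 2 ≤ x) : sieveWeight x ≤ 2 / 3 := by
  rw [sieveWeight, div_le_div_iff₀ (by nlinarith) (by norm_num)]
  nlinarith [mul_nonneg (by linarith : (0 : ℝ) ≤ x - 2)
    (by nlinarith : (0 : ℝ) ≤ 2 * x ^ 2 - x - 4)]

lemma sieveWeight_sub_inv_mem_Icc {x : ℝ} (hx : 2 ≤ x) :
    sieveWeight x - x⁻¹ ∈ Set.Icc 0 (4 / x ^ 2) := by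
  have hden : 0 < (x - 1) * (x ^ 2 - 1) := by nlinarith
  have hdiff : sieveWeight x - x⁻¹ = (x ^ 2 - x - 1) / (x * ((x - 1) * (x ^ 2 - 1))) := by
    have : x - 1 ≠ 0 := by linarith
    have : x ^ 2 - 1 ≠ 0 := by nlinarith
    rw [sieveWeight]
    field_simp
    ring
  rw [hdiff, Set.mem_Icc, div_le_div_iff₀ (by positivity) (by positivity)]
  constructor
  · apply div_nonneg <;> nlinarith
  · nlinarith [mul_nonneg (by linarith : (0 : ℝ) ≤ x - 2)
      (by nlinarith : (0 : ℝ) ≤ 3 * x ^ 2 - 3)]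

lemma abs_neg_log_one_sub_sieveWeight_sub_inv_le {x : ℝ} (hx : 2 ≤ x) :
    |-log (1 - sieveWeight x) - x⁻¹| ≤ 31 / x ^ 2 := by
  have hx0 : 0 < x := by linarith
  obtain ⟨hlow, hup⟩ := sieveWeight_sub_inv_mem_Icc hx
  have hsmall : 4 / x ^ 2 ≤ 2 / x := by
    rw [div_le_div_iff₀ (by positivity) hx0]
    nlinarith
  have ha23 := sieveWeight_le hx
  set a := sieveWeight x
  have ha0 : 0 ≤ a := by
    have : 0 ≤ x⁻¹ := by positivity
    linarith
  have ha : a ≤ 3 / x := by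
    have : x⁻¹ + 2 / x = 3 / x := by ring
    linarith
  have hsq : 3 * a ^ 2 ≤ 27 / x ^ 2 := by
    calc 3 * a ^ 2 ≤ 3 * (3 / x) ^ 2 := by gcongr
      _ = 27 / x ^ 2 := by ring
  have htaylor : |a + log (1 - a)| ≤ 3 * a ^ 2 := by
    have h := abs_log_sub_add_sum_range_le (x := a) (by rw [abs_of_nonneg ha0]; linarith) 1
    norm_num [abs_of_nonneg ha0] at h
    refine h.trans ?_
    rw [div_le_iff₀ (by linarith)]
    nlinarith
  calc |-log (1 - a) - x⁻¹| = |-(a + log (1 - a)) + (a - x⁻¹)| := by ring_nf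
    _ ≤ 3 * a ^ 2 + 4 / x ^ 2 := by
        refine (abs_add_le _ _).trans (add_le_add ?_ ?_)
        · rwa [abs_neg]
        · rwa [abs_of_nonneg hlow]
    _ ≤ 27 / x ^ 2 + 4 / x ^ 2 := by linarith
    _ = 31 / x ^ 2 := by ring

lemma one_sub_sieveWeight_pos {p : ℕ} (hp : p.Prime) : 0 < 1 - sieveWeight p := by
  have := sieveWeight_le (x := p) (by exact_mod_cast hp.two_le)
  linarith

lemma sieveProduct_pos (N : ℕ) : 0 < sieveProduct N :=
  prod_pos fun _ hp => one_sub_sieveWeight_pos (Nat.prime_of_mem_primesBelow hp)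

lemma log_sieveProduct_div {m n : ℕ} (hmn : m ≤ n) :
    log (sieveProduct m / sieveProduct n)
      = ∑ p ∈ n.primesBelow \ m.primesBelow, -log (1 - sieveWeight p) := by
  have hpos : ∀ p ∈ n.primesBelow, 0 < 1 - sieveWeight p := fun p hp =>
    one_sub_sieveWeight_pos (Nat.prime_of_mem_primesBelow hp)
  have hsplit : sieveProduct n
      = (∏ p ∈ n.primesBelow \ m.primesBelow, (1 - sieveWeight p)) * sieveProduct m :=
    (prod_sdiff (Nat.primesBelow_mono hmn)).symm
  rw [hsplit, div_mul_cancel_right₀ (sieveProduct_pos m).ne', log_inv, log_prod fun p hp =>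
    (hpos p (mem_sdiff.mp hp).1).ne', ← sum_neg_distrib]

lemma abs_log_sieveProduct_div_sub_log_log_le {m n : ℕ} (hm : 2 ≤ m) (hmn : m ≤ n) :
    |log (sieveProduct m / sieveProduct n) - (log (log n) - log (log m))| ≤ 75 / log m := by
  have hm' : (2 : ℝ) ≤ m := by exact_mod_cast hm
  have hlogm : 0 < log (m : ℝ) := log_pos (by linarith)
  have htail :
      |∑ p ∈ n.primesBelow \ m.primesBelow, (-log (1 - sieveWeight p) - (p : ℝ)⁻¹)|
        ≤ 62 / log m := by
    have hsub : n.primesBelow \ m.primesBelow ⊆ Ioo (m - 1) n := by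
      rw [Nat.primesBelow_sdiff_primesBelow]
      intro k hk
      have := mem_Ico.mp (mem_filter.mp hk).1
      exact mem_Ioo.mpr ⟨by omega, this.2⟩
    calc _ ≤ ∑ p ∈ n.primesBelow \ m.primesBelow, 31 * ((p : ℝ) ^ 2)⁻¹ := by
          refine (abs_sum_le_sum_abs _ _).trans (sum_le_sum fun p hp => ?_)
          rw [← div_eq_mul_inv]
          exact abs_neg_log_one_sub_sieveWeight_sub_inv_le
            (by exact_mod_cast (Nat.prime_of_mem_primesBelow (mem_sdiff.mp hp).1).two_le)
      _ ≤ 31 * ∑ k ∈ Ioo (m - 1) n, ((k : ℝ) ^ 2)⁻¹ := by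
          rw [← mul_sum]
          gcongr
      _ ≤ 31 * (2 / m) := by
          gcongr
          convert sum_Ioo_inv_sq_le (α := ℝ) (m - 1) n using 2
          rw [Nat.cast_sub (by omega), Nat.cast_one, sub_add_cancel]
      _ ≤ 62 / log m := by
          rw [mul_div_assoc', show (31 : ℝ) * 2 = 62 by norm_num]
          gcongr
          linarith [log_le_sub_one_of_pos (by linarith : (0 : ℝ) < m)]
  have hmertens := abs_sum_inv_primes_sub_log_log_le hm hmn
  rw [log_sieveProduct_div hmn]
  calc _ = |∑ p ∈ n.primesBelow \ m.primesBelow, (-log (1 - sieveWeight p) - (p : ℝ)⁻¹)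
        + (∑ p ∈ n.primesBelow \ m.primesBelow, (p : ℝ)⁻¹
          - (log (log n) - log (log m)))| := by
        rw [sum_sub_distrib]
        ring_nf
    _ ≤ 62 / log m + 13 / log m := (abs_add_le _ _).trans (add_le_add htail hmertens)
    _ = 75 / log m := by ring

lemma log_log_ceil_sub_log_log_mem_Icc {z : ℝ} (hz : 2 ≤ z) :
    log (log ⌈z⌉₊) - log (log z) ∈ Set.Icc 0 (log z)⁻¹ := by
  have hceil : z ≤ ⌈z⌉₊ := Nat.le_ceil z
  have hlogz : 0 < log z := log_pos (by linarith)
  have hlog_le : log z ≤ log ⌈z⌉₊ := log_le_log (by linarith) hceil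
  refine ⟨sub_nonneg.mpr (log_le_log hlogz hlog_le), ?_⟩
  calc log (log ⌈z⌉₊) - log (log z) ≤ (log ⌈z⌉₊ - log z) / log z :=
        log_sub_log_le_div hlogz (hlogz.trans_le hlog_le)
    _ ≤ ((⌈z⌉₊ - z) / z) / log z := by
        gcongr
        exact log_sub_log_le_div (by linarith) (by linarith)
    _ ≤ (log z)⁻¹ := by
        rw [div_eq_mul_inv _ (log z)]
        refine mul_le_of_le_one_left (by positivity) ?_
        rw [div_le_one (by linarith)]
        linarith [Nat.ceil_lt_add_one (by linarith : 0 ≤ z)]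

lemma abs_log_sieveProduct_ceil_div_sub_le {z₁ z₂ : ℝ} (hz₁ : 2 ≤ z₁) (hz₁₂ : z₁ ≤ z₂) :
    |log (sieveProduct ⌈z₁⌉₊ / sieveProduct ⌈z₂⌉₊) - log (log z₂ / log z₁)|
      ≤ 76 / log z₁ := by
  have hlog₁ : 0 < log z₁ := log_pos (by linarith)
  have hlog₁₂ : log z₁ ≤ log z₂ := log_le_log (by linarith) hz₁₂
  have hlog₂ : 0 < log z₂ := hlog₁.trans_le hlog₁₂
  have hm : 2 ≤ ⌈z₁⌉₊ := by exact_mod_cast hz₁.trans (Nat.le_ceil z₁)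
  have hlogm : log z₁ ≤ log ⌈z₁⌉₊ := log_le_log (by linarith) (Nat.le_ceil z₁)
  have hprimes := abs_log_sieveProduct_div_sub_log_log_le hm (Nat.ceil_mono hz₁₂)
  have h75 : 75 / log ⌈z₁⌉₊ ≤ 75 / log z₁ := by gcongr
  obtain ⟨hc₁, hc₁'⟩ := log_log_ceil_sub_log_log_mem_Icc hz₁
  obtain ⟨hc₂, hc₂'⟩ := log_log_ceil_sub_log_log_mem_Icc (hz₁.trans hz₁₂)
  have hinv : (log z₂)⁻¹ ≤ (log z₁)⁻¹ := inv_anti₀ hlog₁ hlog₁₂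
  have h76 : 76 / log z₁ = 75 / log z₁ + (log z₁)⁻¹ := by ring
  rw [log_div hlog₂.ne' hlog₁.ne']
  rw [abs_le] at hprimes ⊢
  constructor <;> linarith [hprimes.1, hprimes.2]

lemma abs_exp_sub_one_le_exp_abs_mul (d : ℝ) : |exp d - 1| ≤ exp |d| * |d| := by
  rcases le_or_gt 0 d with hd | hd
  · have h := add_one_le_exp (-d)
    rw [abs_of_nonneg hd, abs_of_nonneg (by linarith [add_one_le_exp d])]
    have : exp (-d) * exp d = 1 := by rw [← exp_add, neg_add_cancel, exp_zero]
    nlinarith [exp_pos d]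
  · rw [abs_of_neg hd, abs_of_nonpos (sub_nonpos.mpr (exp_lt_one_iff.mpr hd).le)]
    nlinarith [add_one_le_exp d, one_le_exp (neg_nonneg.mpr hd.le)]

lemma abs_sub_le_mul_exp_mul_abs_log_sub_log {x y : ℝ} (hx : 0 < x) (hy : 0 < y) :
    |x - y| ≤ y * exp |log x - log y| * |log x - log y| := by
  have hx' : x = y * exp (log x - log y) := by
    rw [exp_sub, exp_log hx, exp_log hy]
    field_simp
  calc |x - y| = y * |exp (log x - log y) - 1| := by
        rw [← abs_of_pos hy, ← abs_mul, abs_of_pos hy, mul_sub_one, ← hx']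
    _ ≤ y * (exp |log x - log y| * |log x - log y|) := by
        gcongr
        exact abs_exp_sub_one_le_exp_abs_mul _
    _ = _ := by ring

/-- Let `V(z) := ∏_{p<z} (1 - (p²-2)/((p-1)(p²-1)))`, the product over primes `p < z`.
There is `A > 0` such that for all reals `2 ≤ z₁ < z₂`,
`|V(z₁)/V(z₂) - log z₂/log z₁| ≤ A · log z₂/(log z₁)²`. -/
theorem stmt14 :
    ∃ A : ℝ, 0 < A ∧ ∀ z₁ z₂ : ℝ, 2 ≤ z₁ → z₁ < z₂ →
      |(∏ p ∈ (Nat.ceil z₁).primesBelow,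
          (1 - ((p : ℝ) ^ 2 - 2) / (((p : ℝ) - 1) * ((p : ℝ) ^ 2 - 1))))
        / (∏ p ∈ (Nat.ceil z₂).primesBelow,
          (1 - ((p : ℝ) ^ 2 - 2) / (((p : ℝ) - 1) * ((p : ℝ) ^ 2 - 1))))
        - Real.log z₂ / Real.log z₁|
      ≤ A * Real.log z₂ / (Real.log z₁) ^ 2 := by
  refine ⟨76 * exp (76 / log 2), by positivity, fun z₁ z₂ hz₁ hz₁₂ => ?_⟩
  change |sieveProduct ⌈z₁⌉₊ / sieveProduct ⌈z₂⌉₊ - log z₂ / log z₁| ≤ _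
  have hlog₁ : log 2 ≤ log z₁ := log_le_log (by norm_num) hz₁
  have hlog₁₂ : log z₁ ≤ log z₂ := log_le_log (by linarith) hz₁₂.le
  have hlog2 : 0 < log (2 : ℝ) := log_pos (by norm_num)
  have hL : 0 < log z₂ / log z₁ := div_pos (by linarith) (by linarith)
  have hε : 0 ≤ 76 / log z₁ := div_nonneg (by norm_num) (by linarith)
  have hdist := abs_log_sieveProduct_ceil_div_sub_le hz₁ hz₁₂.le
  calc _ ≤ log z₂ / log z₁ * exp (76 / log z₁) * (76 / log z₁) :=
        (abs_sub_le_mul_exp_mul_abs_log_sub_log (div_pos (sieveProduct_pos _) (sieveProduct_pos _)) hL).trans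
          (by gcongr)
    _ ≤ log z₂ / log z₁ * exp (76 / log 2) * (76 / log z₁) := by gcongr
    _ = 76 * exp (76 / log 2) * log z₂ / log z₁ ^ 2 := by ring
end

section
/- Let b ≥ 2 be an integer and n a positive integer with b^n ≡ b (mod n). If d ≥ 2 is a divisor of n with gcd(d, b) = 1, then d divides b^{n−1} − 1; consequently ord_d(b) divides n − 1 and gcd(d, ord_d(b)) = 1. -/
/-!
Reducing `b ^ n ≡ b (mod n)` modulo `d` and cancelling the unit `b` of `ZMod d` gives
`b ^ (n - 1) = 1` there, so `ord_d(b) ∣ n - 1`. Since `n - 1` is coprime to `n`, it is coprime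
to the divisor `d` of `n`, and hence so is its divisor `ord_d(b)`.
-/

theorem IsUnit.pow_pred_eq_one_of_pow_eq_self {M : Type*} [Monoid M] {x : M} (hx : IsUnit x)
    {n : ℕ} (hn : 0 < n) (h : x ^ n = x) : x ^ (n - 1) = 1 :=
  hx.mul_left_cancel <| by rw [← pow_succ', Nat.sub_add_cancel hn, h, mul_one]

theorem ZMod.dvd_sub_one_of_natCast_eq_one {d x : ℕ} (h : (x : ZMod d) = 1) : d ∣ x - 1 := by
  rcases Nat.eq_zero_or_pos x with rfl | hx
  · simp
  · rw [← ZMod.natCast_eq_zero_iff, Nat.cast_sub hx, h, Nat.cast_one, sub_self]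

theorem stmt15_general (b n : ℕ) (hn : 0 < n) (h : b ^ n ≡ b [MOD n])
    (d : ℕ) (hdn : d ∣ n) (hdb : Nat.gcd d b = 1) :
    d ∣ b ^ (n - 1) - 1 ∧
    orderOf ((b : ZMod d)) ∣ (n - 1) ∧
    Nat.gcd d (orderOf ((b : ZMod d))) = 1 := by
  have hunit : IsUnit (b : ZMod d) := (ZMod.isUnit_iff_coprime b d).mpr (Nat.coprime_comm.mp hdb)
  have hpow : (b : ZMod d) ^ n = b := by
    exact_mod_cast (ZMod.natCast_eq_natCast_iff _ _ d).mpr (h.of_dvd hdn)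
  have hone : (b : ZMod d) ^ (n - 1) = 1 := hunit.pow_pred_eq_one_of_pow_eq_self hn hpow
  have hord : orderOf (b : ZMod d) ∣ n - 1 := orderOf_dvd_of_pow_eq_one hone
  refine ⟨?_, hord, ?_⟩
  · exact ZMod.dvd_sub_one_of_natCast_eq_one (by exact_mod_cast hone)
  · have hcop : Nat.Coprime n (n - 1) :=
      (Nat.coprime_self_sub_right hn).mpr (Nat.coprime_one_right n)
    exact (hcop.coprime_dvd_left hdn).coprime_dvd_right hord

/-- Let `b ≥ 2` and `n ≥ 1` with `b^n ≡ b (mod n)`. If `d ≥ 2` divides `n` and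
`gcd(d, b) = 1`, then `d ∣ b^{n-1} - 1`; consequently the multiplicative order of `b`
modulo `d` divides `n - 1`, and `gcd(d, ord_d(b)) = 1`. -/
theorem stmt15 (b n : ℕ) (hb : 2 ≤ b) (hn : 0 < n) (h : b ^ n ≡ b [MOD n])
    (d : ℕ) (hd : 2 ≤ d) (hdn : d ∣ n) (hdb : Nat.gcd d b = 1) :
    d ∣ b ^ (n - 1) - 1 ∧
    orderOf ((b : ZMod d)) ∣ (n - 1) ∧
    Nat.gcd d (orderOf ((b : ZMod d))) = 1 :=
  stmt15_general b n hn h d hdn hdb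
end

section
/- There exists a constant c > 0 such that for every odd integer n ≥ 3, the product ∏_{ℓ | n} (ℓ − 2)/(ℓ − 1), taken over the (odd) prime divisors ℓ of n, is at least c / log(log n + 2). -/
/-!
Since `exp (-1/(ℓ-2)) ≤ (ℓ-2)/(ℓ-1)` and `1/(ℓ-2) ≤ 1/ℓ + 6/ℓ²` for `ℓ ≥ 3`, the product is at
least `exp (-(∑_{ℓ ∣ n} 1/ℓ + π²))`, so it suffices to show `∑_{ℓ ∣ n} 1/ℓ ≤ log log log n + O(1)`.
With `y = ⌊log n⌋ + 3`, at most `log n / log y` prime factors of `n` exceed `y`, and together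
they contribute at most `1`; the primes up to `y` contribute at most `log log y + O(1)` by the upper
half of Mertens' second theorem. That in turn follows by Abel summation from
`∑_{p ≤ N} log p / p ≤ log N + log 4`, which comes from comparing Legendre's formula for `log N!`
with `N log N` and Chebyshev's bound `θ(N) ≤ N log 4`.
-/

open Finset Real
open Nat (primesLE)
open scoped Nat

lemma Nat.div_le_factorization_factorial {p : ℕ} (hp : p.Prime) (N : ℕ) :
    N / p ≤ (N)!.factorization p :=
  calc N / p ≤ (p * (N / p))!.factorization p := by
        rw [factorization_factorial_mul hp]
        exact le_add_self
    _ ≤ (N)!.factorization p :=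
        (factorization_le_iff_dvd (factorial_ne_zero _) (factorial_ne_zero _)).2
          (factorial_dvd_factorial (mul_div_le N p)) p

lemma sum_primesLE_div_mul_log_le_log_factorial (N : ℕ) :
    ∑ p ∈ primesLE N, ((N / p : ℕ) : ℝ) * log p ≤ log N ! :=
  calc ∑ p ∈ primesLE N, ((N / p : ℕ) : ℝ) * log p
      ≤ ∑ p ∈ primesLE N, ((N)!.factorization p : ℝ) * log p :=
        sum_le_sum fun p hp => mul_le_mul_of_nonneg_right
          (by exact_mod_cast Nat.div_le_factorization_factorial (Nat.prime_of_mem_primesLE hp) N)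
          (log_natCast_nonneg p)
    _ ≤ ∑ p ∈ (N)!.primeFactors, ((N)!.factorization p : ℝ) * log p := by
        refine sum_le_sum_of_subset_of_nonneg (fun p hp => ?_) fun p _ _ => ?_
        · have hp' := Nat.prime_of_mem_primesLE hp
          exact Nat.mem_primeFactors.2 ⟨hp', Nat.dvd_factorial hp'.pos (Nat.le_of_mem_primesLE hp),
            Nat.factorial_ne_zero N⟩
        · exact mul_nonneg (Nat.cast_nonneg _) (log_natCast_nonneg p)
    _ = log N ! := by
        rw [log_nat_eq_sum_factorization, Finsupp.sum, Nat.support_factorization]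

theorem sum_primesLE_log_div_le (N : ℕ) :
    ∑ p ∈ primesLE N, log p / p ≤ log N + log 4 := by
  rcases N.eq_zero_or_pos with rfl | hN
  · simp [log_nonneg]
  have hN' : (0 : ℝ) < N := by exact_mod_cast hN
  have hdiv (p : ℕ) : (N : ℝ) / p ≤ ((N / p : ℕ) : ℝ) + 1 := by
    rw [← Nat.floor_div_eq_div (K := ℝ)]
    exact (Nat.lt_floor_add_one _).le
  refine le_of_mul_le_mul_left ?_ hN'
  calc (N : ℝ) * ∑ p ∈ primesLE N, log p / p
      = ∑ p ∈ primesLE N, (N : ℝ) / p * log p := by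
        rw [mul_sum]
        exact sum_congr rfl fun p _ => by ring
    _ ≤ ∑ p ∈ primesLE N, (((N / p : ℕ) : ℝ) + 1) * log p :=
        sum_le_sum fun p _ => mul_le_mul_of_nonneg_right (hdiv p) (log_natCast_nonneg p)
    _ = ∑ p ∈ primesLE N, ((N / p : ℕ) : ℝ) * log p + Chebyshev.theta N := by
        simp only [add_mul, one_mul, sum_add_distrib, Chebyshev.theta_eq_sum_primesLE_log]
    _ ≤ log N ! + log 4 * N :=
        add_le_add (sum_primesLE_div_mul_log_le_log_factorial N)
          (Chebyshev.theta_le_log4_mul_x hN'.le)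
    _ ≤ N * log N + log 4 * N := by
        gcongr
        calc log N ! ≤ log ((N : ℝ) ^ N) :=
              log_le_log (by positivity) (by exact_mod_cast Nat.factorial_le_pow N)
          _ = N * log N := log_pow N N
    _ = N * (log N + log 4) := by ring

lemma Nat.sum_primesLE_succ {M : Type*} [AddCommMonoid M] (f : ℕ → M) (N : ℕ) :
    ∑ p ∈ primesLE (N + 1), f p
      = ∑ p ∈ primesLE N, f p + if (N + 1).Prime then f (N + 1) else 0 := by
  rw [primesLE_succ]
  split_ifs
  · rw [sum_insert (notMem_primesLE N), add_comm]
  · rw [add_zero]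

lemma one_le_log_of_three_le {x : ℝ} (hx : 3 ≤ x) : 1 ≤ log x := by
  rw [le_log_iff_exp_le (by linarith)]
  linarith [exp_one_lt_d9]

lemma mul_inv_sub_inv_le_log_sub_log {a b c : ℝ} (ha : 0 < a) (hab : a ≤ b) (hc : c ≤ a) :
    c * (a⁻¹ - b⁻¹) ≤ log b - log a := by
  have hb : 0 < b := ha.trans_le hab
  calc c * (a⁻¹ - b⁻¹) ≤ a * (a⁻¹ - b⁻¹) :=
        mul_le_mul_of_nonneg_right hc (sub_nonneg.2 (inv_anti₀ ha hab))
    _ = 1 - (b / a)⁻¹ := by field_simp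
    _ ≤ log (b / a) := one_sub_inv_le_log_of_pos (div_pos hb ha)
    _ = log b - log a := log_div hb.ne' ha.ne'

/-- Abel summation, one integer at a time: the correction term is nonnegative by
`sum_primesLE_log_div_le`, and it absorbs the increments of `∑ 1/p`. -/
lemma sum_primesLE_inv_add_le {N : ℕ} (hN : 3 ≤ N) :
    ∑ p ∈ primesLE N, (p : ℝ)⁻¹ + (log N + log 4 - ∑ p ∈ primesLE N, log p / p) / log N
      ≤ log (log N) + 2 + log 4 := by
  induction N, hN using Nat.le_induction with
  | base =>
    have h3 : 1 ≤ log 3 := one_le_log_of_three_le le_rfl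
    have hA : 0 ≤ ∑ p ∈ primesLE 3, log p / p :=
      sum_nonneg fun p _ => div_nonneg (log_natCast_nonneg p) (Nat.cast_nonneg p)
    have hq : (log 3 + log 4 - ∑ p ∈ primesLE 3, log p / p) / log 3 ≤ 1 + log 4 := by
      rw [div_le_iff₀ (by linarith)]
      nlinarith [log_nonneg (show (1 : ℝ) ≤ 4 by norm_num)]
    have hS : ∑ p ∈ primesLE 3, (p : ℝ)⁻¹ = 5 / 6 := by
      rw [show primesLE 3 = {2, 3} by decide]
      norm_num
    push_cast
    linarith [log_nonneg h3]
  | succ N hN ih =>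
    set A := ∑ p ∈ primesLE N, log p / p
    have ha : 0 < log N := log_pos (by exact_mod_cast (by omega : 1 < N))
    have hab : log N ≤ log (N + 1 : ℕ) := log_le_log (by positivity) (by simp)
    have key := mul_inv_sub_inv_le_log_sub_log ha hab (c := A - log 4)
      (by linarith [sum_primesLE_log_div_le N])
    have hstep (u : ℝ) :
        ∑ p ∈ primesLE N, (p : ℝ)⁻¹ + u
          + (log (N + 1 : ℕ) + log 4 - (A + log (N + 1 : ℕ) * u)) / log (N + 1 : ℕ)
        ≤ log (log (N + 1 : ℕ)) + 2 + log 4 := by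
      have hb : log (N + 1 : ℕ) ≠ 0 := (ha.trans_le hab).ne'
      have e : (log (N + 1 : ℕ) + log 4 - (A + log (N + 1 : ℕ) * u)) / log (N + 1 : ℕ)
          = 1 + (log 4 - A) * (log (N + 1 : ℕ))⁻¹ - u := by
        field_simp
        ring
      have e' : (log N + log 4 - A) / log N = 1 + (log 4 - A) * (log N)⁻¹ := by
        field_simp
        ring
      rw [e]
      rw [e'] at ih
      linarith
    rw [Nat.sum_primesLE_succ, Nat.sum_primesLE_succ]
    split_ifs
    · have := hstep ((N + 1 : ℕ) : ℝ)⁻¹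
      rwa [← div_eq_mul_inv] at this
    · simpa only [add_zero, mul_zero] using hstep 0

theorem sum_primesLE_inv_le {N : ℕ} (hN : 3 ≤ N) :
    ∑ p ∈ primesLE N, (p : ℝ)⁻¹ ≤ log (log N) + 2 + log 4 := by
  have hlog : 0 < log N := log_pos (by exact_mod_cast (by omega : 1 < N))
  have := div_nonneg (sub_nonneg.2 (sum_primesLE_log_div_le N)) hlog.le
  linarith [sum_primesLE_inv_add_le hN]

lemma exp_neg_inv_sub_two_le {x : ℝ} (hx : 2 < x) : exp (-(x - 2)⁻¹) ≤ (x - 2) / (x - 1) := by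
  have h : 0 < x - 2 := by linarith
  calc exp (-(x - 2)⁻¹) = (exp (x - 2)⁻¹)⁻¹ := exp_neg _
    _ ≤ ((x - 2)⁻¹ + 1)⁻¹ := inv_anti₀ (by positivity) (add_one_le_exp _)
    _ = (x - 2) / (x - 1) := by
        rw [← inv_div]
        congr 1
        field_simp
        ring

lemma inv_sub_two_le_inv_add {x : ℝ} (hx : 3 ≤ x) : (x - 2)⁻¹ ≤ x⁻¹ + 6 / x ^ 2 := by
  have h : 0 < x - 2 := by linarith
  rw [inv_le_iff_one_le_mul₀ h]
  field_simp
  nlinarith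

theorem exp_neg_sum_inv_add_pi_sq_le_prod {s : Finset ℕ} (hs : ∀ ℓ ∈ s, 3 ≤ ℓ) :
    exp (-(∑ ℓ ∈ s, (ℓ : ℝ)⁻¹ + π ^ 2)) ≤ ∏ ℓ ∈ s, ((ℓ : ℝ) - 2) / ((ℓ : ℝ) - 1) := by
  have h3 (ℓ : ℕ) (hℓ : ℓ ∈ s) : (3 : ℝ) ≤ ℓ := by exact_mod_cast hs ℓ hℓ
  have hzeta : ∑ ℓ ∈ s, 1 / (ℓ : ℝ) ^ 2 ≤ π ^ 2 / 6 :=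
    sum_le_hasSum s (fun _ _ => by positivity) hasSum_zeta_two
  have hsum : ∑ ℓ ∈ s, ((ℓ : ℝ) - 2)⁻¹ ≤ ∑ ℓ ∈ s, (ℓ : ℝ)⁻¹ + π ^ 2 :=
    calc ∑ ℓ ∈ s, ((ℓ : ℝ) - 2)⁻¹ ≤ ∑ ℓ ∈ s, ((ℓ : ℝ)⁻¹ + 6 / (ℓ : ℝ) ^ 2) :=
          sum_le_sum fun ℓ hℓ => inv_sub_two_le_inv_add (h3 ℓ hℓ)
      _ = ∑ ℓ ∈ s, (ℓ : ℝ)⁻¹ + 6 * ∑ ℓ ∈ s, 1 / (ℓ : ℝ) ^ 2 := by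
          rw [sum_add_distrib, mul_sum]
          simp only [mul_one_div]
      _ ≤ ∑ ℓ ∈ s, (ℓ : ℝ)⁻¹ + π ^ 2 := by linarith
  calc exp (-(∑ ℓ ∈ s, (ℓ : ℝ)⁻¹ + π ^ 2)) ≤ exp (-∑ ℓ ∈ s, ((ℓ : ℝ) - 2)⁻¹) :=
        exp_le_exp.2 (neg_le_neg hsum)
    _ = ∏ ℓ ∈ s, exp (-((ℓ : ℝ) - 2)⁻¹) := by rw [← sum_neg_distrib, exp_sum]
    _ ≤ ∏ ℓ ∈ s, ((ℓ : ℝ) - 2) / ((ℓ : ℝ) - 1) :=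
        prod_le_prod (fun _ _ => (exp_pos _).le)
          fun ℓ hℓ => exp_neg_inv_sub_two_le (by linarith [h3 ℓ hℓ])

lemma Nat.pow_card_filter_lt_primeFactors_le {n : ℕ} (hn : n ≠ 0) (y : ℕ) :
    y ^ #{p ∈ n.primeFactors | y < p} ≤ n :=
  calc y ^ #{p ∈ n.primeFactors | y < p} ≤ ∏ p ∈ n.primeFactors with y < p, p :=
        pow_card_le_prod _ _ _ fun _ hp => (mem_filter.1 hp).2.le
    _ ≤ ∏ p ∈ n.primeFactors, p :=
        prod_le_prod_of_subset_of_one_le' (filter_subset _ _)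
          fun _ hp _ => (Nat.prime_of_mem_primeFactors hp).one_le
    _ ≤ n := Nat.le_of_dvd (Nat.pos_of_ne_zero hn) (Nat.prod_primeFactors_dvd n)

theorem sum_inv_primeFactors_le {n y : ℕ} (hn : n ≠ 0) (hy : 2 ≤ y) :
    ∑ p ∈ n.primeFactors, (p : ℝ)⁻¹ ≤ ∑ p ∈ primesLE y, (p : ℝ)⁻¹ + log n / (y * log y) := by
  have hy' : (0 : ℝ) < y := by positivity
  have hlogy : 0 < log y := log_pos (by exact_mod_cast hy)
  set k := #{p ∈ n.primeFactors | y < p}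
  have hk : k * log y ≤ log n := by
    rw [← log_pow]
    exact log_le_log (by positivity)
      (by exact_mod_cast Nat.pow_card_filter_lt_primeFactors_le hn y)
  rw [← sum_filter_not_add_sum_filter _ (y < ·)]
  gcongr
  · intro p hp
    rw [mem_filter, not_lt] at hp
    exact Nat.mem_primesLE.2 ⟨hp.2, Nat.prime_of_mem_primeFactors hp.1⟩
  · calc ∑ p ∈ n.primeFactors with y < p, (p : ℝ)⁻¹ ≤ k • (y : ℝ)⁻¹ :=
          sum_le_card_nsmul _ _ _ fun p hp =>
            inv_anti₀ hy' (by exact_mod_cast (mem_filter.1 hp).2.le)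
      _ ≤ log n / (y * log y) := by
          rw [nsmul_eq_mul, le_div_iff₀ (by positivity)]
          calc k * (y : ℝ)⁻¹ * (y * log y) = k * log y := by field_simp
            _ ≤ log n := hk

theorem sum_inv_primeFactors_le_log_log_log {n : ℕ} (hn : n ≠ 0) :
    ∑ p ∈ n.primeFactors, (p : ℝ)⁻¹ ≤ log (log (log n + 3)) + 3 + log 4 := by
  set y := ⌊log n⌋₊ + 3
  have hlogn : 0 ≤ log n := log_natCast_nonneg n
  have hy3 : (3 : ℝ) ≤ y := by simp [y]
  have hny : log n ≤ y := by
    have := Nat.lt_floor_add_one (log n)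
    push_cast [y]
    linarith
  have hyn : (y : ℝ) ≤ log n + 3 := by
    push_cast [y]
    linarith [Nat.floor_le hlogn]
  have hlogy : 1 ≤ log y := one_le_log_of_three_le hy3
  have hlarge : log n / (y * log y) ≤ 1 :=
    div_le_one_of_le₀ (by nlinarith) (by positivity)
  calc ∑ p ∈ n.primeFactors, (p : ℝ)⁻¹
      ≤ ∑ p ∈ primesLE y, (p : ℝ)⁻¹ + log n / (y * log y) :=
        sum_inv_primeFactors_le hn (by omega)
    _ ≤ log (log y) + 2 + log 4 + 1 := add_le_add (sum_primesLE_inv_le (by omega)) hlarge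
    _ ≤ log (log (log n + 3)) + 3 + log 4 := by
        have := log_le_log (by linarith) (log_le_log (by linarith) hyn)
        linarith

lemma Nat.three_le_of_mem_primeFactors_of_odd {n ℓ : ℕ} (hn : Odd n)
    (hℓ : ℓ ∈ n.primeFactors) : 3 ≤ ℓ := by
  have hℓ2 : ℓ ≠ 2 := by
    rintro rfl
    exact Nat.not_even_iff_odd.2 (hn.of_dvd_nat (Nat.dvd_of_mem_primeFactors hℓ)) even_two
  have := (Nat.prime_of_mem_primeFactors hℓ).two_le
  omega

lemma log_add_three_le_two_mul_log_add_two {x : ℝ} (hx : 0 ≤ x) :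
    log (x + 3) ≤ 2 * log (x + 2) :=
  calc log (x + 3) ≤ log (3 / 2 * (x + 2)) := log_le_log (by linarith) (by linarith)
    _ = log (3 / 2) + log (x + 2) := log_mul (by norm_num) (by linarith)
    _ ≤ log (x + 2) + log (x + 2) := by
        gcongr
        linarith
    _ = 2 * log (x + 2) := by ring

/-- There is `c > 0` such that for every odd integer `n ≥ 3`, the product
`∏_{ℓ ∣ n} (ℓ-2)/(ℓ-1)` over the prime divisors `ℓ` of `n` is at least
`c / log(log n + 2)`. -/
theorem stmt16 :
    ∃ c : ℝ, 0 < c ∧ ∀ n : ℕ, 3 ≤ n → Odd n →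
      c / Real.log (Real.log n + 2)
        ≤ ∏ ℓ ∈ n.primeFactors, (((ℓ : ℝ) - 2) / ((ℓ : ℝ) - 1)) := by
  refine ⟨exp (-(3 + log 4 + π ^ 2)) / 2, by positivity, fun n _ hodd => ?_⟩
  have hlogn : 0 ≤ log n := log_natCast_nonneg n
  have hL : 0 < log (log n + 3) := log_pos (by linarith)
  calc exp (-(3 + log 4 + π ^ 2)) / 2 / log (log n + 2)
      ≤ exp (-(3 + log 4 + π ^ 2)) / log (log n + 3) := by
        rw [div_div]
        exact div_le_div_of_nonneg_left (by positivity) hL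
          (by linarith [log_add_three_le_two_mul_log_add_two hlogn])
    _ = exp (-(log (log (log n + 3)) + 3 + log 4 + π ^ 2)) := by
        rw [show -(log (log (log n + 3)) + 3 + log 4 + π ^ 2)
            = -(3 + log 4 + π ^ 2) + -log (log (log n + 3)) by ring,
          exp_add, exp_neg (log _), exp_log hL, div_eq_mul_inv]
    _ ≤ exp (-(∑ ℓ ∈ n.primeFactors, (ℓ : ℝ)⁻¹ + π ^ 2)) :=
        exp_le_exp.2 (by linarith [sum_inv_primeFactors_le_log_log_log hodd.pos.ne'])
    _ ≤ ∏ ℓ ∈ n.primeFactors, ((ℓ : ℝ) - 2) / ((ℓ : ℝ) - 1) :=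
        exp_neg_sum_inv_add_pi_sq_le_prod fun _ hℓ =>
          Nat.three_le_of_mem_primeFactors_of_odd hodd hℓ
end
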